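/- Let A = ℂ[ℤ₂] be the group algebra of ℤ₂ over ℂ. Then the Hopf-algebraic plaquette operator B on A⊗A⊗A⊗A satisfies B(φ_{g₁} ⊗ φ_{g₂} ⊗ φ_{g₃} ⊗ φ_{g₄}) = (1 + (−1)^{g₁+g₂+g₃+g₄}) · (φ_{g₁} ⊗ φ_{g₂} ⊗ φ_{g₃} ⊗ φ_{g₄}), i.e., B = id^{⊗4} + σ_z ⊗ σ_z ⊗ σ_z ⊗ σ_z where σ_z φ_g = (−1)^g φ_g; and the star operator A_op satisfies A_op = id^{⊗4} + σ_x ⊗ σ_x ⊗ σ_x ⊗ σ_x where σ_x φ_g = φ_{g+1}. Thus the construction recovers the toric code plaquette and vertex operators. -/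

import Mathlib

/-!
STATEMENT 19: For A = ℂ[ℤ₂], the Hopf-algebraic plaquette operator B on A⊗A⊗A⊗A satisfies
B(φ_{g₁} ⊗ φ_{g₂} ⊗ φ_{g₃} ⊗ φ_{g₄}) = (1 + (−1)^{g₁+g₂+g₃+g₄})·(φ_{g₁} ⊗ φ_{g₂} ⊗ φ_{g₃} ⊗ φ_{g₄}),
i.e. B = id^{⊗4} + σ_z⊗σ_z⊗σ_z⊗σ_z, and the star operator satisfies
A_op = id^{⊗4} + σ_x⊗σ_x⊗σ_x⊗σ_x: the construction recovers the toric code operators.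
-/

open TensorProduct

set_option synthInstance.maxHeartbeats 1000000
set_option maxSynthPendingDepth 5
set_option maxHeartbeats 1000000

noncomputable section

/-- The group algebra ℂ[ℤ₂]. -/
abbrev GA : Type := AddMonoidAlgebra ℂ (ZMod 2)

/-- The basis element φ_g of ℂ[ℤ₂]. -/
def phi (g : ZMod 2) : GA := AddMonoidAlgebra.single g 1

/-- The trace character χ(a) = trace of left multiplication by a. -/
def chiGA : GA →ₗ[ℂ] ℂ := (LinearMap.trace ℂ GA) ∘ₗ (LinearMap.mul ℂ GA)

/-- Comultiplication on ℂ[ℤ₂]: Δφ_g = φ_g ⊗ φ_g. -/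
def comulGA : GA →ₗ[ℂ] GA ⊗[ℂ] GA :=
  (Finsupp.lsum ℂ fun g => LinearMap.toSpanSingleton ℂ (GA ⊗[ℂ] GA) (phi g ⊗ₜ[ℂ] phi g)) ∘ₗ
    (AddMonoidAlgebra.coeffLinearEquiv ℂ).toLinearMap

/-- The fourfold tensor product. -/
abbrev T4GA : Type := GA ⊗[ℂ] (GA ⊗[ℂ] (GA ⊗[ℂ] GA))

/-- `(a ⊗ b) ⊗ (c ⊗ t) ↦ (a*c) ⊗ (b ⊗ t)`. -/
def mulStep (N : Type*) [AddCommGroup N] [Module ℂ N] :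
    ((GA ⊗[ℂ] GA) ⊗[ℂ] (GA ⊗[ℂ] N)) →ₗ[ℂ] (GA ⊗[ℂ] (GA ⊗[ℂ] N)) :=
  (TensorProduct.map (LinearMap.mul' ℂ GA) LinearMap.id) ∘ₗ
    (TensorProduct.tensorTensorTensorComm ℂ GA GA GA N).toLinearMap

/-- Comultiplication of each of the four tensor factors. -/
def comul4GA : T4GA →ₗ[ℂ]
    ((GA ⊗[ℂ] GA) ⊗[ℂ] ((GA ⊗[ℂ] GA) ⊗[ℂ] ((GA ⊗[ℂ] GA) ⊗[ℂ] (GA ⊗[ℂ] GA)))) :=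
  TensorProduct.map comulGA (TensorProduct.map comulGA (TensorProduct.map comulGA comulGA))

/-- The plaquette operator
`B(x₁ ⊗ x₂ ⊗ x₃ ⊗ x₄) = ∑ χ(x₁₍₁₎x₂₍₁₎x₃₍₁₎x₄₍₁₎) x₁₍₂₎ ⊗ x₂₍₂₎ ⊗ x₃₍₂₎ ⊗ x₄₍₂₎`. -/
def plaquetteGA : T4GA →ₗ[ℂ] T4GA :=
  (TensorProduct.lid ℂ T4GA).toLinearMap
    ∘ₗ (LinearMap.rTensor T4GA chiGA)
    ∘ₗ (mulStep (GA ⊗[ℂ] (GA ⊗[ℂ] GA)))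
    ∘ₗ (LinearMap.lTensor (GA ⊗[ℂ] GA) (mulStep (GA ⊗[ℂ] GA)))
    ∘ₗ (LinearMap.lTensor (GA ⊗[ℂ] GA) (LinearMap.lTensor (GA ⊗[ℂ] GA) (mulStep GA)))
    ∘ₗ comul4GA

/-- The cotrace element Λ = φ₀ + φ₁. -/
def LambdaGA : GA := phi 0 + phi 1

/-- ∑ Λ₍₁₎ ⊗ Λ₍₂₎ ⊗ Λ₍₃₎ ⊗ Λ₍₄₎, the threefold comultiplication of Λ. -/
def LambdaLegs : T4GA :=
  (LinearMap.lTensor GA (LinearMap.lTensor GA comulGA))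
    ((LinearMap.lTensor GA comulGA) (comulGA LambdaGA))

/-- The star operator: componentwise left multiplication by Λ₍₁₎ ⊗ Λ₍₂₎ ⊗ Λ₍₃₎ ⊗ Λ₍₄₎. -/
def starOpGA : T4GA →ₗ[ℂ] T4GA := LinearMap.mulLeft ℂ LambdaLegs

/-- σ_z : φ_g ↦ (−1)^g φ_g. -/
def sigmaZ : GA →ₗ[ℂ] GA :=
  (AddMonoidAlgebra.coeffLinearEquiv ℂ).symm.toLinearMap ∘ₗ
    (Finsupp.lsum ℂ fun (g : ZMod 2) => ((-1 : ℂ) ^ g.val) • Finsupp.lsingle g) ∘ₗ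
    (AddMonoidAlgebra.coeffLinearEquiv ℂ).toLinearMap

/-- σ_x : φ_g ↦ φ_{g+1}. -/
def sigmaX : GA →ₗ[ℂ] GA :=
  (AddMonoidAlgebra.coeffLinearEquiv ℂ).symm.toLinearMap ∘ₗ
    (Finsupp.lsum ℂ fun (g : ZMod 2) => Finsupp.lsingle (g + 1)) ∘ₗ
    (AddMonoidAlgebra.coeffLinearEquiv ℂ).toLinearMap

/-!
In the basis `φ_g` everything is explicit: `Δφ_g = φ_g ⊗ φ_g`, `φ_g φ_h = φ_{g+h}`, and `χ(φ_g)`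
counts the fixed points of `h ↦ g + h`, so `χ(φ_g) = 2·[g = 0] = 1 + (-1)^g`. Hence `B` scales
`φ_{g₁} ⊗ ⋯ ⊗ φ_{g₄}` by `χ(φ_{g₁+⋯+g₄})`, the eigenvalue of `id + σ_z^{⊗4}`, and the legs of `Λ`
are `φ₀^{⊗4} + φ₁^{⊗4}`, whose left multiplication is `id + σ_x^{⊗4}`.
-/

open AddMonoidAlgebra in
theorem AddMonoidAlgebra.trace_mulLeft_single {k G : Type*} [CommRing k] [AddGroup G]
    [Fintype G] [DecidableEq G] (g : G) :
    LinearMap.trace k k[G] (LinearMap.mulLeft k (single g 1)) =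
      if g = 0 then (Fintype.card G : k) else 0 := by
  rw [LinearMap.trace_eq_matrix_trace k (AddMonoidAlgebra.basis G k)]
  simp only [Matrix.trace, Matrix.diag, LinearMap.toMatrix_apply, LinearMap.mulLeft_apply,
    basis_apply, single_mul_single, one_mul]
  simp [AddMonoidAlgebra.basis, Finsupp.single_apply]

theorem ZMod.neg_one_pow_val_add {R : Type*} [Ring R] (a b : ZMod 2) :
    (-1 : R) ^ (a + b).val = (-1) ^ a.val * (-1) ^ b.val := by
  rw [ZMod.val_add, ← pow_add]
  exact (neg_one_pow_eq_pow_mod_two ..).symm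

lemma phi_mul_phi (g h : ZMod 2) : phi g * phi h = phi (g + h) := by
  simp [phi, AddMonoidAlgebra.single_mul_single]

lemma comulGA_phi (g : ZMod 2) : comulGA (phi g) = phi g ⊗ₜ[ℂ] phi g := by
  simp [comulGA, phi]

lemma chiGA_phi (g : ZMod 2) : chiGA (phi g) = 1 + (-1 : ℂ) ^ g.val := by
  change LinearMap.trace ℂ GA (LinearMap.mulLeft ℂ (phi g)) = _
  rw [phi, AddMonoidAlgebra.trace_mulLeft_single]
  rcases (by decide : ∀ g : ZMod 2, g = 0 ∨ g = 1) g with rfl | rfl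
  · norm_num [ZMod.card]
  · norm_num [ZMod.val_one]

lemma sigmaZ_phi (g : ZMod 2) : sigmaZ (phi g) = ((-1 : ℂ) ^ g.val) • phi g := by
  simp [sigmaZ, phi]

lemma sigmaX_phi (g : ZMod 2) : sigmaX (phi g) = phi (g + 1) := by
  simp [sigmaX, phi]

lemma mulStep_tmul (N : Type*) [AddCommGroup N] [Module ℂ N] (a b c : GA) (n : N) :
    mulStep N ((a ⊗ₜ[ℂ] b) ⊗ₜ[ℂ] (c ⊗ₜ[ℂ] n)) = (a * c) ⊗ₜ[ℂ] (b ⊗ₜ[ℂ] n) := by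
  simp [mulStep]

lemma T4GA.ext_phi {M : Type*} [AddCommGroup M] [Module ℂ M] {f f' : T4GA →ₗ[ℂ] M}
    (h : ∀ g₁ g₂ g₃ g₄ : ZMod 2, f (phi g₁ ⊗ₜ[ℂ] (phi g₂ ⊗ₜ[ℂ] (phi g₃ ⊗ₜ[ℂ] phi g₄))) =
      f' (phi g₁ ⊗ₜ[ℂ] (phi g₂ ⊗ₜ[ℂ] (phi g₃ ⊗ₜ[ℂ] phi g₄)))) :
    f = f' := by
  let b := AddMonoidAlgebra.basis (ZMod 2) ℂ
  refine (b.tensorProduct (b.tensorProduct (b.tensorProduct b))).ext ?_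
  rintro ⟨g₁, g₂, g₃, g₄⟩
  simpa [b, Module.Basis.tensorProduct_apply', phi] using h g₁ g₂ g₃ g₄

lemma plaquetteGA_phi (g₁ g₂ g₃ g₄ : ZMod 2) :
    plaquetteGA (phi g₁ ⊗ₜ[ℂ] (phi g₂ ⊗ₜ[ℂ] (phi g₃ ⊗ₜ[ℂ] phi g₄))) =
      (1 + (-1 : ℂ) ^ (g₁ + g₂ + g₃ + g₄).val) •
        (phi g₁ ⊗ₜ[ℂ] (phi g₂ ⊗ₜ[ℂ] (phi g₃ ⊗ₜ[ℂ] phi g₄))) := by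
  simp only [plaquetteGA, comul4GA, LinearMap.comp_apply, TensorProduct.map_tmul, comulGA_phi,
    LinearMap.lTensor_tmul, mulStep_tmul, phi_mul_phi, LinearMap.rTensor_tmul,
    LinearEquiv.coe_coe, TensorProduct.lid_tmul, chiGA_phi, add_assoc]

lemma map_sigmaZ_phi (g₁ g₂ g₃ g₄ : ZMod 2) :
    TensorProduct.map sigmaZ (TensorProduct.map sigmaZ (TensorProduct.map sigmaZ sigmaZ))
        (phi g₁ ⊗ₜ[ℂ] (phi g₂ ⊗ₜ[ℂ] (phi g₃ ⊗ₜ[ℂ] phi g₄))) =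
      (-1 : ℂ) ^ (g₁ + g₂ + g₃ + g₄).val •
        (phi g₁ ⊗ₜ[ℂ] (phi g₂ ⊗ₜ[ℂ] (phi g₃ ⊗ₜ[ℂ] phi g₄))) := by
  simp only [TensorProduct.map_tmul, sigmaZ_phi, TensorProduct.smul_tmul, TensorProduct.tmul_smul,
    smul_smul, ZMod.neg_one_pow_val_add]
  ring_nf

lemma LambdaLegs_eq : LambdaLegs =
    phi 0 ⊗ₜ[ℂ] (phi 0 ⊗ₜ[ℂ] (phi 0 ⊗ₜ[ℂ] phi 0)) +
      phi 1 ⊗ₜ[ℂ] (phi 1 ⊗ₜ[ℂ] (phi 1 ⊗ₜ[ℂ] phi 1)) := by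
  simp [LambdaLegs, LambdaGA, comulGA_phi]

lemma starOpGA_phi (g₁ g₂ g₃ g₄ : ZMod 2) :
    starOpGA (phi g₁ ⊗ₜ[ℂ] (phi g₂ ⊗ₜ[ℂ] (phi g₃ ⊗ₜ[ℂ] phi g₄))) =
      phi g₁ ⊗ₜ[ℂ] (phi g₂ ⊗ₜ[ℂ] (phi g₃ ⊗ₜ[ℂ] phi g₄)) +
        phi (g₁ + 1) ⊗ₜ[ℂ] (phi (g₂ + 1) ⊗ₜ[ℂ] (phi (g₃ + 1) ⊗ₜ[ℂ] phi (g₄ + 1))) := by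
  simp only [starOpGA, LinearMap.mulLeft_apply, LambdaLegs_eq, add_mul,
    Algebra.TensorProduct.tmul_mul_tmul, phi_mul_phi, zero_add, add_comm (1 : ZMod 2)]

theorem toric_code_from_hopf :
    (∀ g₁ g₂ g₃ g₄ : ZMod 2,
      plaquetteGA (phi g₁ ⊗ₜ[ℂ] (phi g₂ ⊗ₜ[ℂ] (phi g₃ ⊗ₜ[ℂ] phi g₄))) =
        (1 + (-1 : ℂ) ^ (g₁ + g₂ + g₃ + g₄).val) •
          (phi g₁ ⊗ₜ[ℂ] (phi g₂ ⊗ₜ[ℂ] (phi g₃ ⊗ₜ[ℂ] phi g₄)))) ∧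
    plaquetteGA = LinearMap.id +
      TensorProduct.map sigmaZ (TensorProduct.map sigmaZ (TensorProduct.map sigmaZ sigmaZ)) ∧
    starOpGA = LinearMap.id +
      TensorProduct.map sigmaX (TensorProduct.map sigmaX (TensorProduct.map sigmaX sigmaX)) := by
  refine ⟨plaquetteGA_phi, T4GA.ext_phi fun g₁ g₂ g₃ g₄ => ?_, T4GA.ext_phi fun g₁ g₂ g₃ g₄ => ?_⟩
  · rw [plaquetteGA_phi, LinearMap.add_apply, map_sigmaZ_phi, LinearMap.id_apply, add_smul,
      one_smul]
  · simp only [starOpGA_phi, LinearMap.add_apply, LinearMap.id_apply, TensorProduct.map_tmul,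
      sigmaX_phi]

end
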